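/- If s is a rational number with 0 < s < 1 and N = (2 − s²)(3 − s²)/((1 − s)²(2 + s)²) · M² for some nonzero integer M, then N is not the square of a rational number. -/

import Mathlib

lemma zmod3_aux : ∀ A P Q B : ZMod 3, A^2 + P^2 = 2*Q^2 → A^2 + Q^2 = B^2 →
    P = 0 ∧ Q = 0 := by decide

theorem stmt_18 (s : ℚ) (h0 : 0 < s) (h1 : s < 1) (M : ℤ) (hM : M ≠ 0) (N : ℚ)
    (hN : N = (2 - s ^ 2) * (3 - s ^ 2) / ((1 - s) ^ 2 * (2 + s) ^ 2) * (M : ℚ) ^ 2) :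
    ¬ ∃ r : ℚ, r ^ 2 = N := by
  rintro ⟨r, hr⟩
  set p : ℤ := s.num with hp
  set q : ℤ := (s.den : ℤ) with hq
  have hq0 : 0 < q := by rw [hq]; exact_mod_cast s.pos
  have hp0 : 0 < p := Rat.num_pos.mpr h0
  have hpq : p < q := by
    have hs : (p : ℚ) / (q : ℚ) = s := by exact_mod_cast s.num_div_den
    have h : (p : ℚ) < (q : ℚ) := by
      rw [← hs] at h1
      have hq0' : (0:ℚ) < (q:ℚ) := by exact_mod_cast hq0
      exact (div_lt_one hq0').mp h1
    exact_mod_cast h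
  -- t² = (2 - s²)(3 - s²)
  have h1s : (1 : ℚ) - s ≠ 0 := by intro h; rw [sub_eq_zero] at h; exact absurd h.symm h1.ne
  have h2s : (2 : ℚ) + s ≠ 0 := by positivity
  have hM' : (M : ℚ) ≠ 0 := Int.cast_ne_zero.mpr hM
  set t : ℚ := r * (1 - s) * (2 + s) / M with ht
  have htsq : t ^ 2 = (2 - s ^ 2) * (3 - s ^ 2) := by
    rw [ht]
    field_simp
    rw [hN] at hr
    field_simp at hr
    linear_combination hr
  -- u = t * q², u² = (2q²-p²)(3q²-p²)
  have hsval : s = (p : ℚ) / (q : ℚ) := by exact_mod_cast (s.num_div_den).symm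
  have hqQ : (q : ℚ) ≠ 0 := by positivity
  set u : ℚ := t * (q : ℚ) ^ 2 with hu
  have husq : u ^ 2 = (((2 * q ^ 2 - p ^ 2) * (3 * q ^ 2 - p ^ 2) : ℤ) : ℚ) := by
    have key : ((2 * q ^ 2 - p ^ 2) * (3 * q ^ 2 - p ^ 2) : ℚ) =
        (2 - s ^ 2) * (3 - s ^ 2) * (q : ℚ) ^ 4 := by
      rw [hsval]; field_simp
    rw [hu, mul_pow, htsq]
    push_cast
    rw [key]; ring
  -- u is an integer
  have hden : u.den = 1 := by
    have h2 : (u ^ 2).den = 1 := by rw [husq]; exact Rat.den_intCast _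
    have h3 : u.den ^ 2 = 1 := (Rat.den_pow u 2).symm.trans h2
    exact Nat.dvd_one.mp (h3 ▸ dvd_pow_self u.den two_ne_zero)
  set m : ℤ := u.num with hm
  have hum : (m : ℚ) = u := by
    rw [hm]
    have := Rat.num_div_den u
    rw [hden] at this
    simpa using this
  have hmsq : (2 * q ^ 2 - p ^ 2) * (3 * q ^ 2 - p ^ 2) = m ^ 2 := by
    have : ((m : ℚ)) ^ 2 = (((2 * q ^ 2 - p ^ 2) * (3 * q ^ 2 - p ^ 2) : ℤ) : ℚ) := by
      rw [hum, husq]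
    exact_mod_cast this.symm
  -- coprimality
  have hcp : IsCoprime p q := by
    rw [Int.isCoprime_iff_gcd_eq_one]
    simpa [Int.gcd, hp, hq] using s.reduced
  have hcp2 : IsCoprime (p ^ 2) (q ^ 2) := hcp.pow
  have hcpAB : IsCoprime (2 * q ^ 2 - p ^ 2) (3 * q ^ 2 - p ^ 2) := by
    obtain ⟨x, y, hxy⟩ := hcp2
    exact ⟨-3 * x - y, 2 * x + y, by linear_combination hxy⟩
  have hApos : 0 < 2 * q ^ 2 - p ^ 2 := by nlinarith
  have hBpos : 0 < 3 * q ^ 2 - p ^ 2 := by nlinarith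
  obtain ⟨a, ha⟩ := Int.sq_of_isCoprime (c := m) hcpAB hmsq
  obtain ⟨b, hb⟩ := Int.sq_of_isCoprime (c := m) hcpAB.symm (by linear_combination hmsq)
  have ha' : a ^ 2 = 2 * q ^ 2 - p ^ 2 := by
    rcases ha with h | h
    · exact h.symm
    · nlinarith [sq_nonneg a]
  have hb' : b ^ 2 = 3 * q ^ 2 - p ^ 2 := by
    rcases hb with h | h
    · exact h.symm
    · nlinarith [sq_nonneg b]
  -- mod 3
  have e1 : a ^ 2 + p ^ 2 = 2 * q ^ 2 := by linarith
  have e2 : a ^ 2 + q ^ 2 = b ^ 2 := by linarith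
  have e1' : (a : ZMod 3) ^ 2 + (p : ZMod 3) ^ 2 = 2 * (q : ZMod 3) ^ 2 := by
    exact_mod_cast congrArg (Int.cast : ℤ → ZMod 3) e1
  have e2' : (a : ZMod 3) ^ 2 + (q : ZMod 3) ^ 2 = (b : ZMod 3) ^ 2 := by
    exact_mod_cast congrArg (Int.cast : ℤ → ZMod 3) e2
  obtain ⟨hP, hQ⟩ := zmod3_aux _ _ _ _ e1' e2'
  have hdp : (3 : ℤ) ∣ p := by exact_mod_cast (ZMod.intCast_zmod_eq_zero_iff_dvd p 3).mp hP
  have hdq : (3 : ℤ) ∣ q := by exact_mod_cast (ZMod.intCast_zmod_eq_zero_iff_dvd q 3).mp hQ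
  have : IsUnit (3 : ℤ) := hcp.isUnit_of_dvd' hdp hdq
  rw [Int.isUnit_iff] at this
  omega
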